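/- arXiv:2210.06671 — 3 statements merged into one kernel-verified Lean document; each statement's English description precedes it below -/
import Mathlib

section
/- Let Π^i ∈ ℝ_+^{k_l × k_l^i} satisfy Π^i 𝟙 = (1/k_l)𝟙 and let (Π̃^i)* ∈ ℝ_+^{k_{l−1} × k_{l−1}^i} satisfy (Π̃^i)* 𝟙 = (1/k_{l−1})𝟙. Then the minimizer over W ∈ ℝ^{k_l × k_{l−1}} of B(W) = (1/n) Σ_{i=1}^n Σ_{j,g,q,s} (W_{jq} − W^i_{gs})² (Π̃^i)*_{qs} Π^i_{jg} is given entrywise by W_{jq} = k_l k_{l−1} (1/n) Σ_i (Π^i W^i (Π̃^i)*ᵀ)_{jq}. -/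
open Finset Matrix

theorem wb_fusion_weight_update
    (n kl klm1 : ℕ) (hn : 0 < n) (hkl : 0 < kl) (hklm1 : 0 < klm1)
    (ki kim1 : Fin n → ℕ)
    (Wi : ∀ i : Fin n, Matrix (Fin (ki i)) (Fin (kim1 i)) ℝ)
    (Pi : ∀ i : Fin n, Matrix (Fin kl) (Fin (ki i)) ℝ)
    (Pitstar : ∀ i : Fin n, Matrix (Fin klm1) (Fin (kim1 i)) ℝ)
    (hPi_nonneg : ∀ i j g, 0 ≤ Pi i j g)
    (hPit_nonneg : ∀ i q s, 0 ≤ Pitstar i q s)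
    (hPi_rows : ∀ i j, ∑ g, Pi i j g = 1 / (kl : ℝ))
    (hPit_rows : ∀ i q, ∑ s, Pitstar i q s = 1 / (klm1 : ℝ)) :
    ∀ W : Matrix (Fin kl) (Fin klm1) ℝ,
      (1 / (n : ℝ)) * ∑ i, ∑ j, ∑ g, ∑ q, ∑ s,
        (((kl : ℝ) * (klm1 : ℝ) * ((1 / (n : ℝ)) *
            ∑ i', (Pi i' * Wi i' * (Pitstar i')ᵀ) j q)) - Wi i g s) ^ 2
          * Pitstar i q s * Pi i j g
      ≤ (1 / (n : ℝ)) * ∑ i, ∑ j, ∑ g, ∑ q, ∑ s,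
        (W j q - Wi i g s) ^ 2 * Pitstar i q s * Pi i j g := by
  intro W
  have hn' : (0:ℝ) < n := by exact_mod_cast hn
  have hkl' : (0:ℝ) < kl := by exact_mod_cast hkl
  have hklm1' : (0:ℝ) < klm1 := by exact_mod_cast hklm1
  set S : Fin kl → Fin klm1 → ℝ :=
    fun j q => ∑ i', (Pi i' * Wi i' * (Pitstar i')ᵀ) j q with hS
  set c : ℝ := (n:ℝ)/((kl:ℝ)*(klm1:ℝ)) with hc
  have hcpos : (0:ℝ) < c := by rw [hc]; positivity
  set K : ℝ := ∑ i, ∑ j, ∑ g, ∑ q, ∑ s,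
      (Wi i g s)^2 * Pitstar i q s * Pi i j g with hK
  -- generic reordering lemma
  have reorder : ∀ (h : Fin kl → Fin klm1 → ℝ)
      (u : ∀ i : Fin n, Fin (ki i) → Fin (kim1 i) → ℝ),
      ∑ i, ∑ j, ∑ g, ∑ q, ∑ s, h j q * u i g s * Pitstar i q s * Pi i j g
        = ∑ j, ∑ q, h j q * ∑ i, ∑ g, ∑ s, u i g s * Pitstar i q s * Pi i j g := by
    intro h u
    have step1 : ∀ i j, ∑ g, ∑ q, ∑ s, h j q * u i g s * Pitstar i q s * Pi i j g
        = ∑ q, h j q * ∑ g, ∑ s, u i g s * Pitstar i q s * Pi i j g := by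
      intro i j
      rw [Finset.sum_comm]
      refine Finset.sum_congr rfl fun q _ => ?_
      rw [Finset.mul_sum]
      refine Finset.sum_congr rfl fun g _ => ?_
      rw [Finset.mul_sum]
      refine Finset.sum_congr rfl fun s _ => ?_
      ring
    calc ∑ i, ∑ j, ∑ g, ∑ q, ∑ s, h j q * u i g s * Pitstar i q s * Pi i j g
        = ∑ i, ∑ j, ∑ q, h j q * ∑ g, ∑ s, u i g s * Pitstar i q s * Pi i j g :=
          Finset.sum_congr rfl fun i _ => Finset.sum_congr rfl fun j _ => step1 i j
      _ = ∑ j, ∑ q, h j q * ∑ i, ∑ g, ∑ s, u i g s * Pitstar i q s * Pi i j g := by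
          rw [Finset.sum_comm]
          refine Finset.sum_congr rfl fun j _ => ?_
          rw [Finset.sum_comm]
          refine Finset.sum_congr rfl fun q _ => ?_
          rw [Finset.mul_sum]
  -- total weight
  have wt : ∀ j q, ∑ i, ∑ g, ∑ s, (1:ℝ) * Pitstar i q s * Pi i j g = c := by
    intro j q
    have hi : ∀ i : Fin n, ∑ g, ∑ s, (1:ℝ) * Pitstar i q s * Pi i j g
        = 1/((kl:ℝ)*(klm1:ℝ)) := by
      intro i
      calc ∑ g, ∑ s, (1:ℝ) * Pitstar i q s * Pi i j g
          = ∑ g, (∑ s, Pitstar i q s) * Pi i j g := by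
            refine Finset.sum_congr rfl fun g _ => ?_
            rw [Finset.sum_mul]
            exact Finset.sum_congr rfl fun s _ => by ring
        _ = ∑ g, (1/(klm1:ℝ)) * Pi i j g := by
            exact Finset.sum_congr rfl fun g _ => by rw [hPit_rows]
        _ = (1/(klm1:ℝ)) * ∑ g, Pi i j g := by rw [Finset.mul_sum]
        _ = 1/((kl:ℝ)*(klm1:ℝ)) := by
            rw [hPi_rows]; field_simp
    rw [Finset.sum_congr rfl fun i _ => hi i, Finset.sum_const, hc]
    simp only [Finset.card_univ, Fintype.card_fin, nsmul_eq_mul]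
    field_simp
  -- weighted sum of Wi entries
  have wS : ∀ j q, ∑ i, ∑ g, ∑ s, Wi i g s * Pitstar i q s * Pi i j g = S j q := by
    intro j q
    refine Finset.sum_congr rfl fun i _ => ?_
    rw [Finset.sum_comm, Matrix.mul_apply]
    refine Finset.sum_congr rfl fun s _ => ?_
    rw [Matrix.transpose_apply, Matrix.mul_apply, Finset.sum_mul]
    exact Finset.sum_congr rfl fun g _ => by ring
  -- expansion of the quadratic objective
  have split : ∀ V : Matrix (Fin kl) (Fin klm1) ℝ,
      ∑ i, ∑ j, ∑ g, ∑ q, ∑ s, (V j q - Wi i g s)^2 * Pitstar i q s * Pi i j g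
        = K - ∑ j, ∑ q, (2 * V j q) * S j q + ∑ j, ∑ q, (V j q)^2 * c := by
    intro V
    have h1 : ∀ (i : Fin n) (j : Fin kl) (g : Fin (ki i)) (q : Fin klm1)
        (s : Fin (kim1 i)),
        (V j q - Wi i g s)^2 * Pitstar i q s * Pi i j g
        = (Wi i g s)^2 * Pitstar i q s * Pi i j g
          - (2 * V j q) * Wi i g s * Pitstar i q s * Pi i j g
          + ((V j q)^2) * (1:ℝ) * Pitstar i q s * Pi i j g := by
      intros; ring
    calc ∑ i, ∑ j, ∑ g, ∑ q, ∑ s, (V j q - Wi i g s)^2 * Pitstar i q s * Pi i j g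
        = (∑ i, ∑ j, ∑ g, ∑ q, ∑ s, (Wi i g s)^2 * Pitstar i q s * Pi i j g)
          - (∑ i, ∑ j, ∑ g, ∑ q, ∑ s,
              (2 * V j q) * Wi i g s * Pitstar i q s * Pi i j g)
          + (∑ i, ∑ j, ∑ g, ∑ q, ∑ s,
              ((V j q)^2) * (1:ℝ) * Pitstar i q s * Pi i j g) := by
          simp only [h1, Finset.sum_add_distrib, Finset.sum_sub_distrib]
      _ = K - (∑ j, ∑ q, (2 * V j q) *
              ∑ i, ∑ g, ∑ s, Wi i g s * Pitstar i q s * Pi i j g)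
          + (∑ j, ∑ q, ((V j q)^2) *
              ∑ i, ∑ g, ∑ s, (1:ℝ) * Pitstar i q s * Pi i j g) := by
          rw [← hK]
          congr 1
          · congr 1
            exact reorder (fun j q => 2 * V j q) (fun i g s => Wi i g s)
          · exact reorder (fun j q => (V j q)^2) (fun i g s => (1:ℝ))
      _ = K - ∑ j, ∑ q, (2 * V j q) * S j q + ∑ j, ∑ q, (V j q)^2 * c := by
          congr 1
          · congr 1
            exact Finset.sum_congr rfl fun j _ =>
              Finset.sum_congr rfl fun q _ => by rw [wS]
          · exact Finset.sum_congr rfl fun j _ =>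
              Finset.sum_congr rfl fun q _ => by rw [wt]
  -- main inequality for the optimal V1
  have main : ∀ V1 V2 : Matrix (Fin kl) (Fin klm1) ℝ,
      (∀ j q, V1 j q * c = S j q) →
      (1/(n:ℝ)) * ∑ i, ∑ j, ∑ g, ∑ q, ∑ s,
          (V1 j q - Wi i g s)^2 * Pitstar i q s * Pi i j g
      ≤ (1/(n:ℝ)) * ∑ i, ∑ j, ∑ g, ∑ q, ∑ s,
          (V2 j q - Wi i g s)^2 * Pitstar i q s * Pi i j g := by
    intro V1 V2 hV1
    rw [split V1, split V2]
    refine mul_le_mul_of_nonneg_left ?_ (by positivity)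
    have h2 : ∀ (j : Fin kl) (q : Fin klm1),
        (V1 j q)^2 * c - (2 * V1 j q) * S j q
          ≤ (V2 j q)^2 * c - (2 * V2 j q) * S j q := by
      intro j q
      have hs := hV1 j q
      rw [← hs]
      nlinarith [mul_nonneg hcpos.le (sq_nonneg (V2 j q - V1 j q))]
    have h3 : ∑ j, ∑ q, ((V1 j q)^2 * c - (2 * V1 j q) * S j q)
        ≤ ∑ j, ∑ q, ((V2 j q)^2 * c - (2 * V2 j q) * S j q) :=
      Finset.sum_le_sum fun j _ => Finset.sum_le_sum fun q _ => h2 j q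
    simp only [Finset.sum_sub_distrib] at h3
    linarith
  exact main (fun j q => (kl:ℝ) * (klm1:ℝ) * ((1/(n:ℝ)) * S j q)) W
    (fun j q => by
      rw [hc]
      field_simp
      try ring)
end

section
/- Decomposition of the quadratic GW cost: for L(C, C̄)_{ijkl} = (C_{ik} − C̄_{jl})² and Π ∈ Γ(a,b), one has ⟨L(C,C̄) ⊗ Π, Π⟩ = Σ_{i,k} C_{ik}² a_i a_k + Σ_{j,l} C̄_{jl}² b_j b_l − 2 ⟨C Π C̄ᵀ, Π⟩ (Frobenius inner product), i.e. only the cross term depends on Π beyond its marginals. -/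
open Finset Matrix

def couplings {n1 n2 : ℕ} (a : Fin n1 → ℝ) (b : Fin n2 → ℝ) :
    Set (Matrix (Fin n1) (Fin n2) ℝ) :=
  {P | (∀ i j, 0 ≤ P i j) ∧ (∀ i, ∑ j, P i j = a i) ∧ (∀ j, ∑ i, P i j = b j)}

theorem gw_cost_decomposition {n1 n2 : ℕ}
    (C : Matrix (Fin n1) (Fin n1) ℝ) (Cbar : Matrix (Fin n2) (Fin n2) ℝ)
    (a : Fin n1 → ℝ) (b : Fin n2 → ℝ)
    (ha : ∀ i, 0 ≤ a i) (hb : ∀ j, 0 ≤ b j)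
    (hasum : ∑ i, a i = 1) (hbsum : ∑ j, b j = 1)
    (P : Matrix (Fin n1) (Fin n2) ℝ) (hP : P ∈ couplings a b) :
    ∑ i, ∑ j, (∑ k, ∑ l, (C i k - Cbar j l) ^ 2 * P k l) * P i j
      = (∑ i, ∑ k, C i k ^ 2 * a i * a k)
        + (∑ j, ∑ l, Cbar j l ^ 2 * b j * b l)
        - 2 * ∑ i, ∑ j, (C * P * Cbarᵀ) i j * P i j := by
  obtain ⟨hpos, hrow, hcol⟩ := hP
  have key : ∀ i j, (∑ k, ∑ l, (C i k - Cbar j l) ^ 2 * P k l)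
      = (∑ k, C i k ^ 2 * a k) + (∑ l, Cbar j l ^ 2 * b l)
        - 2 * ∑ k, ∑ l, C i k * Cbar j l * P k l := by
    intro i j
    have : ∀ k, ∑ l, (C i k - Cbar j l) ^ 2 * P k l
        = C i k ^ 2 * a k + (∑ l, Cbar j l ^ 2 * P k l)
          - 2 * ∑ l, C i k * Cbar j l * P k l := by
      intro k
      rw [← hrow k, Finset.mul_sum, Finset.mul_sum]
      rw [← Finset.sum_add_distrib, ← Finset.sum_sub_distrib]
      exact Finset.sum_congr rfl fun l _ => by ring
    calc ∑ k, ∑ l, (C i k - Cbar j l) ^ 2 * P k l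
        = ∑ k, (C i k ^ 2 * a k + (∑ l, Cbar j l ^ 2 * P k l)
            - 2 * ∑ l, C i k * Cbar j l * P k l) := Finset.sum_congr rfl fun k _ => this k
      _ = (∑ k, C i k ^ 2 * a k) + (∑ k, ∑ l, Cbar j l ^ 2 * P k l)
            - 2 * ∑ k, ∑ l, C i k * Cbar j l * P k l := by
          rw [Finset.sum_sub_distrib, Finset.sum_add_distrib, Finset.mul_sum]
      _ = _ := by
          congr 2
          rw [Finset.sum_comm]
          exact Finset.sum_congr rfl fun l _ => by
            rw [← hcol l, Finset.mul_sum]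
  have cross : ∀ i j, (C * P * Cbarᵀ) i j = ∑ k, ∑ l, C i k * Cbar j l * P k l := by
    intro i j
    simp only [Matrix.mul_apply, Matrix.transpose_apply, Finset.sum_mul]
    rw [Finset.sum_comm]
    exact Finset.sum_congr rfl fun k _ => Finset.sum_congr rfl fun l _ => by ring
  have expand : ∑ i, ∑ j, (∑ k, ∑ l, (C i k - Cbar j l) ^ 2 * P k l) * P i j
      = ∑ i, ∑ j, ((∑ k, C i k ^ 2 * a k) * P i j + (∑ l, Cbar j l ^ 2 * b l) * P i j
          - 2 * ((C * P * Cbarᵀ) i j * P i j)) := by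
    refine Finset.sum_congr rfl fun i _ => Finset.sum_congr rfl fun j _ => ?_
    rw [key i j, cross i j]; ring
  rw [expand]
  simp only [Finset.sum_sub_distrib, Finset.sum_add_distrib, ← Finset.mul_sum]
  congr 1
  congr 1
  · refine Finset.sum_congr rfl fun i _ => ?_
    rw [hrow i, Finset.sum_mul]
    exact Finset.sum_congr rfl fun k _ => by ring
  · rw [Finset.sum_comm]
    refine Finset.sum_congr rfl fun j _ => ?_
    rw [← Finset.mul_sum, hcol j, Finset.sum_mul]
    exact Finset.sum_congr rfl fun l _ => by ring
end

section
/- The fixed update for the hidden-to-hidden weights in GWB fusion: given Π^i ∈ ℝ_+^{k×k_i} with row sums 1/k and column sums 1/k_i, the minimizer over H ∈ ℝ^{k×k} of (1/n) Σ_i Σ_{j,g,q,s} (H_{jq} − H^i_{gs})² Π^i_{jg} Π^i_{qs} is H = k² (1/n) Σ_i Π^i H^i (Π^i)ᵀ. -/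
open Finset Matrix

theorem gwb_fusion_hidden_weight_update
    (n k : ℕ) (hn : 0 < n) (hk : 0 < k)
    (ki : Fin n → ℕ)
    (Hi : ∀ i : Fin n, Matrix (Fin (ki i)) (Fin (ki i)) ℝ)
    (Pi : ∀ i : Fin n, Matrix (Fin k) (Fin (ki i)) ℝ)
    (hPi_nonneg : ∀ i j g, 0 ≤ Pi i j g)
    (hPi_rows : ∀ i j, ∑ g, Pi i j g = 1 / (k : ℝ))
    (hPi_cols : ∀ i g, ∑ j, Pi i j g = 1 / (ki i : ℝ)) :
    ∀ H : Matrix (Fin k) (Fin k) ℝ,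
      (1 / (n : ℝ)) * ∑ i, ∑ j, ∑ g, ∑ q, ∑ s,
        (((k : ℝ) ^ 2 * ((1 / (n : ℝ)) *
            ∑ i', (Pi i' * Hi i' * (Pi i')ᵀ) j q)) - Hi i g s) ^ 2
          * Pi i j g * Pi i q s
      ≤ (1 / (n : ℝ)) * ∑ i, ∑ j, ∑ g, ∑ q, ∑ s,
        (H j q - Hi i g s) ^ 2 * Pi i j g * Pi i q s := by
  intro H
  have hn' : (0:ℝ) < n := by exact_mod_cast hn
  have hk' : (0:ℝ) < k := by exact_mod_cast hk
  have hreorder : ∀ (F : ∀ i : Fin n, Fin k → Fin (ki i) → Fin k → Fin (ki i) → ℝ),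
      ∑ i, ∑ j, ∑ g, ∑ q, ∑ s, F i j g q s
        = ∑ j, ∑ q, ∑ i, ∑ g, ∑ s, F i j g q s := by
    intro F
    rw [Finset.sum_comm]
    refine Finset.sum_congr rfl fun j _ => ?_
    calc ∑ i, ∑ g, ∑ q, ∑ s, F i j g q s
        = ∑ i, ∑ q, ∑ g, ∑ s, F i j g q s :=
          Finset.sum_congr rfl fun i _ => Finset.sum_comm
      _ = ∑ q, ∑ i, ∑ g, ∑ s, F i j g q s := Finset.sum_comm
  rw [hreorder, hreorder]
  apply mul_le_mul_of_nonneg_left _ (by positivity)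
  refine Finset.sum_le_sum fun j _ => Finset.sum_le_sum fun q _ => ?_
  -- fix j q
  set S1 : ℝ := ∑ i, ∑ g, ∑ s, Pi i j g * Pi i q s with hS1def
  set B : ℝ := ∑ i, ∑ g, ∑ s, Hi i g s * Pi i j g * Pi i q s with hBdef
  have hS1 : S1 = n / k^2 := by
    rw [hS1def]
    have : ∀ i : Fin n, ∑ g, ∑ s, Pi i j g * Pi i q s = (1/(k:ℝ)) * (1/(k:ℝ)) := by
      intro i
      rw [← Finset.sum_mul_sum, hPi_rows, hPi_rows]
    rw [Finset.sum_congr rfl fun i _ => this i, Finset.sum_const, Finset.card_univ,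
      Fintype.card_fin, nsmul_eq_mul]
    field_simp
  have hB : B = ∑ i', (Pi i' * Hi i' * (Pi i')ᵀ) j q := by
    rw [hBdef]
    refine Finset.sum_congr rfl fun i _ => ?_
    simp only [Matrix.mul_apply, Matrix.transpose_apply, Finset.sum_mul]
    rw [Finset.sum_comm]
    exact Finset.sum_congr rfl fun g _ => Finset.sum_congr rfl fun s _ => by ring
  have expand : ∀ c : ℝ,
      ∑ i, ∑ g, ∑ s, (c - Hi i g s) ^ 2 * Pi i j g * Pi i q s
        = c^2 * S1 - 2*c*B + ∑ i, ∑ g, ∑ s, (Hi i g s)^2 * Pi i j g * Pi i q s := by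
    intro c
    rw [hS1def, hBdef, Finset.mul_sum, Finset.mul_sum]
    rw [← Finset.sum_sub_distrib, ← Finset.sum_add_distrib]
    refine Finset.sum_congr rfl fun i _ => ?_
    rw [Finset.mul_sum, Finset.mul_sum, ← Finset.sum_sub_distrib, ← Finset.sum_add_distrib]
    refine Finset.sum_congr rfl fun g _ => ?_
    rw [Finset.mul_sum, Finset.mul_sum, ← Finset.sum_sub_distrib, ← Finset.sum_add_distrib]
    exact Finset.sum_congr rfl fun s _ => by ring
  have hc : ((k : ℝ) ^ 2 * ((1 / (n : ℝ)) * ∑ i', (Pi i' * Hi i' * (Pi i')ᵀ) j q))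
      = (k:ℝ)^2 / n * B := by rw [hB]; ring
  rw [expand, expand, hc, hS1]
  set a : ℝ := (n:ℝ) / (k:ℝ)^2 with hadef
  set r : ℝ := (k:ℝ)^2 / (n:ℝ) with hrdef
  have ha : (0:ℝ) < a := by rw [hadef]; positivity
  have e2 : H j q ^ 2 * a - 2 * H j q * B - ((r*B)^2 * a - 2*(r*B)*B)
      = a * (H j q - r * B)^2 := by
    rw [hadef, hrdef]
    field_simp
    ring
  have hnn : 0 ≤ a * (H j q - r * B)^2 := mul_nonneg ha.le (sq_nonneg _)
  linarith [e2, hnn]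
end
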